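/- arXiv:2301.04209 — 2 statements merged into one kernel-verified Lean document; each statement's English description precedes it below -/
import Mathlib

section
/- Suppose B₀ satisfies CB₀ = 0 under the null, P̄₀ = I - P₀, and θ ∈ ℝⁿ solves (P̄₀ ∘ P̄₀)θ = (P₁₁, …, Pₙₙ)ᵀ. Then the matrix P_θ = P - P̄₀ D_θ P̄₀ (with D_θ = diag(θ)) has all zero diagonal entries, and |P_θ|_F² = m - Σᵢ θᵢ P_{ii}. -/
open Matrix Finset

/-- With `P`, `P₀` orthogonal projections satisfying `P P₀ = P₀ P = 0` and
`trace P = m`, set `P̄₀ = I - P₀` and let `θ` solve `(P̄₀ ∘ P̄₀) θ = diag P`.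
Then `P_θ = P - P̄₀ D_θ P̄₀` has zero diagonal and `‖P_θ‖_F² = m - ∑ i, θ i * P i i`. -/
theorem stmt_17 {n m : ℕ} (P P₀ : Matrix (Fin n) (Fin n) ℝ)
    (hPsym : Pᵀ = P) (hPidem : P * P = P)
    (hP₀sym : P₀ᵀ = P₀) (hP₀idem : P₀ * P₀ = P₀)
    (horth : P * P₀ = 0) (horth' : P₀ * P = 0)
    (htr : P.trace = (m : ℝ))
    (θ : Fin n → ℝ)
    (hθ : ((1 - P₀) ⊙ (1 - P₀)).mulVec θ = fun i => P i i)
    (Pθ : Matrix (Fin n) (Fin n) ℝ)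
    (hPθ : Pθ = P - (1 - P₀) * Matrix.diagonal θ * (1 - P₀)) :
    (∀ i, Pθ i i = 0) ∧
      ∑ i, ∑ j, (Pθ i j) ^ 2 = (m : ℝ) - ∑ i, θ i * P i i := by
  obtain ⟨Q, hQ⟩ : ∃ M : Matrix (Fin n) (Fin n) ℝ, M = 1 - P₀ := ⟨1 - P₀, rfl⟩
  rw [← hQ] at hθ hPθ
  set D : Matrix (Fin n) (Fin n) ℝ := Matrix.diagonal θ with hD
  have hQsym : Qᵀ = Q := by rw [hQ]; simp [transpose_sub, hP₀sym]
  have hQidem : Q * Q = Q := by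
    rw [hQ]
    simp only [sub_mul, mul_sub, one_mul, mul_one, hP₀idem]
    abel
  have hQP : Q * P = P := by rw [hQ]; simp [sub_mul, horth']
  have hPQ : P * Q = P := by rw [hQ]; simp [mul_sub, horth]
  have hdiag : ∀ i, (Q * D * Q) i i = P i i := by
    intro i
    have h := congrFun hθ i
    simp only [mulVec, dotProduct, hadamard_apply] at h
    rw [← h]
    simp only [Matrix.mul_apply, hD, Finset.sum_mul]
    rw [Finset.sum_comm]
    refine Finset.sum_congr rfl fun j _ => ?_
    have hsymm : Q j i = Q i j := by
      conv_lhs => rw [← hQsym]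
      rfl
    simp [Matrix.diagonal, Finset.sum_ite_eq, hsymm]
    try ring
  have hPθsym : Pθᵀ = Pθ := by
    rw [hPθ]
    simp [transpose_sub, transpose_mul, hPsym, hQsym, hD, Matrix.diagonal_transpose,
      Matrix.mul_assoc]
  have hS : ∀ (A : Matrix (Fin n) (Fin n) ℝ), (D * A).trace = ∑ i, θ i * A i i := by
    intro A
    simp [Matrix.trace, Matrix.diag, hD, Matrix.diagonal_mul]
  have t1 : (P * (Q * D * Q)).trace = ∑ i, θ i * P i i := by
    have e : P * (Q * D * Q) = P * D * Q := by
      rw [← Matrix.mul_assoc, ← Matrix.mul_assoc, hPQ]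
    rw [e, Matrix.trace_mul_comm, ← Matrix.mul_assoc, hQP, Matrix.trace_mul_comm, hS]
    try rfl
  have t2 : ((Q * D * Q) * P).trace = ∑ i, θ i * P i i := by
    rw [Matrix.trace_mul_comm, t1]
  have t3 : ((Q * D * Q) * (Q * D * Q)).trace = ∑ i, θ i * P i i := by
    have e1 : (Q * D * Q) * (Q * D * Q) = Q * (D * (Q * D * Q)) := by
      simp only [Matrix.mul_assoc]
      rw [← Matrix.mul_assoc Q Q, hQidem]
    have e2 : (D * (Q * D * Q)) * Q = D * (Q * D * Q) := by
      simp only [Matrix.mul_assoc]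
      rw [hQidem]
    rw [e1, Matrix.trace_mul_comm, e2, hS]
    exact Finset.sum_congr rfl fun i _ => by rw [hdiag]
  have hdiag0 : ∀ i, Pθ i i = 0 := by
    intro i
    rw [hPθ]
    simp [Matrix.sub_apply, hdiag i]
  refine ⟨hdiag0, ?_⟩
  have hsq : ∑ i, ∑ j, Pθ i j ^ 2 = (Pθ * Pθᵀ).trace := by
    simp [Matrix.trace, Matrix.diag, Matrix.mul_apply, sq]
  rw [hsq, hPθsym, hPθ]
  rw [sub_mul, mul_sub, mul_sub, hPidem]
  rw [Matrix.trace_sub, Matrix.trace_sub, Matrix.trace_sub, htr, t1, t2, t3]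
  ring
end

section
/- Let V₁, …, Vₙ be independent mean-zero random vectors with covariance Σ, P̄₁ = I - H an orthogonal projection (H the hat matrix), and V̂ = P̄₁V. Then for i ≠ j, E[(V̂ᵢᵀV̂ⱼ)²] = (P̄_{ii,1}P̄_{jj,1} + P̄_{ij,1}²)‖Σ‖_F² + P̄_{ij,1}² (trace Σ)² + Σ_{k=1}^n (P̄_{ik,1}P̄_{jk,1})² {Var(V₁ᵀV₁) - 2‖Σ‖_F²}. -/
/-!
Write `Gₐᵦ = Vₐᵀ V_b`, so that `V̂ᵢᵀ V̂ⱼ = ∑ₐ,ᵦ P̄ᵢₐ P̄ⱼᵦ Gₐᵦ` and the left-hand side is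
`∑ P̄ᵢₐ P̄ⱼᵦ P̄ᵢₐ' P̄ⱼᵦ' E[Gₐᵦ Gₐ'ᵦ']`. By independence and `E Vₐ = 0`, the moment
`E[Gₐᵦ Gₐ'ᵦ']` vanishes as soon as one of the four indices occurs only once; the surviving
patterns are `a = b ≠ a' = b'` (giving `(tr Σ)²`), the two crossed pairings (giving `‖Σ‖_F²`
each), and `a = b = a' = b'` (giving `E‖V₁‖⁴`). Summing against the weights and using
`P̄ P̄ᵀ = P̄` turns the three pairing sums into `P̄ᵢⱼ²`, `P̄ᵢᵢ P̄ⱼⱼ` and `P̄ᵢⱼ²`, and the diagonal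
correction into `∑ₖ (P̄ᵢₖ P̄ⱼₖ)² (E‖V₁‖⁴ - (tr Σ)² - 2‖Σ‖_F²)`.
-/

open MeasureTheory ProbabilityTheory Matrix Finset

section Integrability

variable {Ω κ : Type*} {mΩ : MeasurableSpace Ω} {μ : Measure Ω} [Fintype κ] {X Y : Ω → κ → ℝ}

lemma memLp_two_sum_sq (hX : Measurable X)
    (hX4 : Integrable (fun ω => (∑ k, X ω k ^ 2) ^ 2) μ) :
    MemLp (fun ω => ∑ k, X ω k ^ 2) 2 μ :=
  (memLp_two_iff_integrable_sq (by fun_prop)).2 hX4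

lemma memLp_two_apply_mul_apply (hX : Measurable X) (hY : Measurable Y)
    (hX4 : Integrable (fun ω => (∑ k, X ω k ^ 2) ^ 2) μ)
    (hY4 : Integrable (fun ω => (∑ k, Y ω k ^ 2) ^ 2) μ) (k l : κ) :
    MemLp (fun ω => X ω k * Y ω l) 2 μ := by
  refine ((memLp_two_sum_sq hX hX4).add (memLp_two_sum_sq hY hY4)).of_le (by fun_prop)
    (ae_of_all _ fun ω => ?_)
  have hx : X ω k ^ 2 ≤ ∑ m, X ω m ^ 2 :=
    single_le_sum (fun m _ => sq_nonneg (X ω m)) (mem_univ k)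
  have hy : Y ω l ^ 2 ≤ ∑ m, Y ω m ^ 2 :=
    single_le_sum (fun m _ => sq_nonneg (Y ω m)) (mem_univ l)
  have hsum : 0 ≤ ∑ m, X ω m ^ 2 + ∑ m, Y ω m ^ 2 := by positivity
  simp only [Real.norm_eq_abs, Pi.add_apply, abs_mul, abs_of_nonneg hsum]
  nlinarith [sq_abs (X ω k), sq_abs (Y ω l), sq_nonneg (|X ω k| - |Y ω l|)]

lemma memLp_two_dotProduct (hX : Measurable X) (hY : Measurable Y)
    (hX4 : Integrable (fun ω => (∑ k, X ω k ^ 2) ^ 2) μ)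
    (hY4 : Integrable (fun ω => (∑ k, Y ω k ^ 2) ^ 2) μ) :
    MemLp (fun ω => X ω ⬝ᵥ Y ω) 2 μ :=
  memLp_finsetSum _ fun k _ => memLp_two_apply_mul_apply hX hY hX4 hY4 k k

lemma integral_sum_sq {ι : Type*} (s : Finset ι) {f : ι → Ω → ℝ}
    (hf : ∀ i ∈ s, MemLp (f i) 2 μ) :
    ∫ ω, (∑ i ∈ s, f i ω) ^ 2 ∂μ = ∑ i ∈ s, ∑ j ∈ s, ∫ ω, f i ω * f j ω ∂μ := by
  have hint : ∀ i ∈ s, ∀ j ∈ s, Integrable (fun ω => f i ω * f j ω) μ :=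
    fun i hi j hj => (hf i hi).integrable_mul (hf j hj)
  simp_rw [sq, sum_mul_sum]
  rw [integral_finsetSum _ fun i hi => integrable_finsetSum _ (hint i hi)]
  exact sum_congr rfl fun i hi => integral_finsetSum _ (hint i hi)

end Integrability

section Moments

variable {Ω κ : Type*} {mΩ : MeasurableSpace Ω} {μ : Measure Ω} [Fintype κ]
  {X Y : Ω → κ → ℝ} {S T : Matrix κ κ ℝ}

lemma integral_dotProduct_self [IsProbabilityMeasure μ] (hX : Measurable X)
    (hX4 : Integrable (fun ω => (∑ k, X ω k ^ 2) ^ 2) μ)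
    (hcov : ∀ k l, ∫ ω, X ω k * X ω l ∂μ = S k l) :
    ∫ ω, X ω ⬝ᵥ X ω ∂μ = S.trace := by
  refine (integral_finsetSum _ fun k _ =>
    (memLp_two_apply_mul_apply hX hX hX4 hX4 k k).integrable one_le_two).trans ?_
  exact sum_congr rfl fun k _ => hcov k k

lemma variance_sum_sq [IsProbabilityMeasure μ] (hX : Measurable X)
    (hX4 : Integrable (fun ω => (∑ k, X ω k ^ 2) ^ 2) μ)
    (hcov : ∀ k l, ∫ ω, X ω k * X ω l ∂μ = S k l) :
    variance (fun ω => ∑ k, X ω k ^ 2) μ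
      = ∫ ω, (∑ k, X ω k ^ 2) ^ 2 ∂μ - S.trace ^ 2 := by
  rw [variance_eq_sub (memLp_two_sum_sq hX hX4), ← integral_dotProduct_self hX hX4 hcov]
  simp only [Pi.pow_apply, sq, dotProduct]

lemma IndepFun.integral_dotProduct_self_mul_dotProduct_self [IsProbabilityMeasure μ]
    (hind : IndepFun X Y μ) (hX : Measurable X) (hY : Measurable Y)
    (hX4 : Integrable (fun ω => (∑ k, X ω k ^ 2) ^ 2) μ)
    (hY4 : Integrable (fun ω => (∑ k, Y ω k ^ 2) ^ 2) μ)
    (hXcov : ∀ k l, ∫ ω, X ω k * X ω l ∂μ = S k l)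
    (hYcov : ∀ k l, ∫ ω, Y ω k * Y ω l ∂μ = T k l) :
    ∫ ω, (X ω ⬝ᵥ X ω) * (Y ω ⬝ᵥ Y ω) ∂μ = S.trace * T.trace := by
  have hind' : IndepFun (fun ω => X ω ⬝ᵥ X ω) (fun ω => Y ω ⬝ᵥ Y ω) μ :=
    hind.comp (φ := fun x => x ⬝ᵥ x) (ψ := fun y => y ⬝ᵥ y) (by fun_prop) (by fun_prop)
  rw [hind'.integral_fun_mul_eq_mul_integral (by fun_prop) (by fun_prop),
    integral_dotProduct_self hX hX4 hXcov, integral_dotProduct_self hY hY4 hYcov]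

lemma IndepFun.integral_dotProduct_mul_self (hind : IndepFun X Y μ)
    (hX : Measurable X) (hY : Measurable Y)
    (hX4 : Integrable (fun ω => (∑ k, X ω k ^ 2) ^ 2) μ)
    (hY4 : Integrable (fun ω => (∑ k, Y ω k ^ 2) ^ 2) μ)
    (hXcov : ∀ k l, ∫ ω, X ω k * X ω l ∂μ = S k l)
    (hYcov : ∀ k l, ∫ ω, Y ω k * Y ω l ∂μ = T k l) :
    ∫ ω, (X ω ⬝ᵥ Y ω) * (X ω ⬝ᵥ Y ω) ∂μ = ∑ k, ∑ l, S k l * T k l := by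
  have hexpand : ∀ ω, (X ω ⬝ᵥ Y ω) * (X ω ⬝ᵥ Y ω)
      = ∑ k, ∑ l, (X ω k * X ω l) * (Y ω k * Y ω l) := fun ω => by
    simp only [dotProduct, sum_mul_sum]
    exact sum_congr rfl fun k _ => sum_congr rfl fun l _ => by ring
  have hint : ∀ k l, Integrable (fun ω => (X ω k * X ω l) * (Y ω k * Y ω l)) μ := fun k l =>
    (memLp_two_apply_mul_apply hX hX hX4 hX4 k l).integrable_mul
      (memLp_two_apply_mul_apply hY hY hY4 hY4 k l)
  simp_rw [hexpand]
  rw [integral_finsetSum _ fun k _ => integrable_finsetSum _ fun l _ => hint k l]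
  refine sum_congr rfl fun k _ => ?_
  rw [integral_finsetSum _ fun l _ => hint k l]
  refine sum_congr rfl fun l _ => ?_
  have hind' : IndepFun (fun ω => X ω k * X ω l) (fun ω => Y ω k * Y ω l) μ :=
    hind.comp (φ := fun x : κ → ℝ => x k * x l) (ψ := fun y : κ → ℝ => y k * y l)
      (by fun_prop) (by fun_prop)
  rw [hind'.integral_fun_mul_eq_mul_integral (by fun_prop) (by fun_prop), hXcov, hYcov]

lemma IndepFun.integral_dotProduct_mul_eq_zero {Z : Ω → ℝ}
    (hind : IndepFun X (fun ω => (Y ω, Z ω)) μ)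
    (hX : Measurable X) (hY : Measurable Y) (hZ : Measurable Z)
    (hmean : ∀ k, ∫ ω, X ω k ∂μ = 0)
    (hint : ∀ k, Integrable (fun ω => X ω k * (Y ω k * Z ω)) μ) :
    ∫ ω, (X ω ⬝ᵥ Y ω) * Z ω ∂μ = 0 := by
  have hexpand : ∀ ω, (X ω ⬝ᵥ Y ω) * Z ω = ∑ k, X ω k * (Y ω k * Z ω) := fun ω => by
    simp only [dotProduct, sum_mul, mul_assoc]
  simp_rw [hexpand]
  rw [integral_finsetSum _ fun k _ => hint k]
  refine sum_eq_zero fun k _ => ?_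
  have hind' : IndepFun (fun ω => X ω k) (fun ω => Y ω k * Z ω) μ :=
    hind.comp (φ := fun x : κ → ℝ => x k) (ψ := fun p : (κ → ℝ) × ℝ => p.1 k * p.2)
      (by fun_prop) (by fun_prop)
  rw [hind'.integral_fun_mul_eq_mul_integral (by fun_prop) (by fun_prop), hmean, zero_mul]

end Moments

lemma iIndepFun.indepFun_prodMk₃ {Ω ι β : Type*} {mΩ : MeasurableSpace Ω}
    {μ : Measure Ω} {mβ : MeasurableSpace β} [DecidableEq ι] {f : ι → Ω → β}
    (hf : iIndepFun f μ) (hmeas : ∀ i, Measurable (f i)) {a b c e : ι}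
    (hb : b ≠ a) (hc : c ≠ a) (he : e ≠ a) :
    IndepFun (f a) (fun ω => (f b ω, f c ω, f e ω)) μ := by
  have hdisj : Disjoint ({a} : Finset ι) {b, c, e} := by simp [hb.symm, hc.symm, he.symm]
  exact (hf.indepFun_finset {a} {b, c, e} hdisj hmeas).comp
    (φ := fun x : ({a} : Finset ι) → β => x ⟨a, mem_singleton_self a⟩)
    (ψ := fun y : ({b, c, e} : Finset ι) → β => (y ⟨b, by simp⟩, y ⟨c, by simp⟩, y ⟨e, by simp⟩))
    (by fun_prop) (by fun_prop)

/-- The value of `E[(Vₐᵀ V_b) (V_cᵀ V_e)]` for i.i.d. mean-zero vectors, with `t = (tr Σ)²`,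
`F = ‖Σ‖_F²` and `R = E‖V‖⁴ - t - 2F`: the three pairings of the indices, corrected on the
diagonal `a = b = c = e` where all three of them hold at once. -/
def gramFourthMoment {ι : Type*} [DecidableEq ι] (t F R : ℝ) (a b c e : ι) : ℝ :=
  (if a = b ∧ c = e then t else 0) + (if a = c ∧ b = e then F else 0)
    + (if a = e ∧ b = c then F else 0) + (if a = b ∧ a = c ∧ a = e then R else 0)

lemma sum_mul_gramFourthMoment {ι : Type*} [Fintype ι] [DecidableEq ι] (c d : ι → ℝ)
    (t F R : ℝ) :
    ∑ a, ∑ b, ∑ a', ∑ b', c a * d b * (c a' * d b') * gramFourthMoment t F R a b a' b'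
      = t * (c ⬝ᵥ d) ^ 2 + F * ((c ⬝ᵥ c) * (d ⬝ᵥ d) + (c ⬝ᵥ d) ^ 2)
        + R * ∑ a, (c a * d a) ^ 2 := by
  simp only [gramFourthMoment, mul_add, sum_add_distrib, mul_ite, mul_zero, ite_and, sum_ite_eq,
    mem_univ, if_true, sum_ite_irrel, sum_const_zero]
  simp only [dotProduct, sq, mul_sum, sum_mul]
  rw [sum_comm (f := fun x i => F * (c i * c i * _))]
  simp only [← add_assoc]
  congr 1; congr 1; congr 1
  all_goals first
    | exact sum_congr rfl fun _ _ => sum_congr rfl fun _ _ => by ring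
    | exact sum_congr rfl fun _ _ => by ring

lemma eq_gramFourthMoment {ι : Type*} [DecidableEq ι] {M : ι → ι → ι → ι → ℝ} {t F m : ℝ}
    (hswap : ∀ a b c e, M a b c e = M b a c e) (hpairs : ∀ a b c e, M a b c e = M c e a b)
    (hzero : ∀ a b c e, b ≠ a → c ≠ a → e ≠ a → M a b c e = 0)
    (htr : ∀ a c, a ≠ c → M a a c c = t) (hF : ∀ a b, a ≠ b → M a b a b = F)
    (hall : ∀ a, M a a a a = m) (a b c e : ι) :
    M a b c e = gramFourthMoment t F (m - t - 2 * F) a b c e := by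
  unfold gramFourthMoment
  grind

section GramMoments

variable {Ω ι κ : Type*} {mΩ : MeasurableSpace Ω} {μ : Measure Ω} [IsProbabilityMeasure μ]
  [Fintype κ] [DecidableEq ι] {V : ι → Ω → κ → ℝ} {S : Matrix κ κ ℝ} {m4 : ℝ}

lemma integral_dotProduct_mul_dotProduct (hindep : iIndepFun V μ)
    (hmeas : ∀ i, Measurable (V i)) (hmean : ∀ i k, ∫ ω, V i ω k ∂μ = 0)
    (hcov : ∀ i k l, ∫ ω, V i ω k * V i ω l ∂μ = S k l)
    (hmom4 : ∀ i, Integrable (fun ω => (∑ k, V i ω k ^ 2) ^ 2) μ)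
    (hm4 : ∀ i, ∫ ω, (∑ k, V i ω k ^ 2) ^ 2 ∂μ = m4) (a b c e : ι) :
    ∫ ω, (V a ω ⬝ᵥ V b ω) * (V c ω ⬝ᵥ V e ω) ∂μ
      = gramFourthMoment (S.trace ^ 2) (∑ k, ∑ l, S k l ^ 2)
          (m4 - S.trace ^ 2 - 2 * ∑ k, ∑ l, S k l ^ 2) a b c e := by
  refine eq_gramFourthMoment (M := fun a b c e => ∫ ω, (V a ω ⬝ᵥ V b ω) * (V c ω ⬝ᵥ V e ω) ∂μ)
    (fun a b c e => by simp only [dotProduct_comm]) (fun a b c e => by simp only [mul_comm])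
    ?_ ?_ ?_ ?_ a b c e
  · intro a b c e hb hc he
    have hind := (iIndepFun.indepFun_prodMk₃ hindep hmeas hb hc he).comp (φ := id)
      (ψ := fun p : (κ → ℝ) × (κ → ℝ) × (κ → ℝ) => (p.1, p.2.1 ⬝ᵥ p.2.2)) measurable_id
      (by fun_prop)
    refine IndepFun.integral_dotProduct_mul_eq_zero hind (hmeas a) (hmeas b)
      (by fun_prop) (hmean a) fun k => ?_
    simpa only [Pi.mul_def, mul_assoc] using
      (memLp_two_apply_mul_apply (hmeas a) (hmeas b) (hmom4 a) (hmom4 b) k k).integrable_mul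
        (memLp_two_dotProduct (hmeas c) (hmeas e) (hmom4 c) (hmom4 e))
  · intro a c h
    rw [sq]
    exact IndepFun.integral_dotProduct_self_mul_dotProduct_self (hindep.indepFun h) (hmeas a)
      (hmeas c) (hmom4 a) (hmom4 c) (hcov a) (hcov c)
  · intro a b h
    simp only [sq]
    exact IndepFun.integral_dotProduct_mul_self (hindep.indepFun h) (hmeas a) (hmeas b)
      (hmom4 a) (hmom4 b) (hcov a) (hcov b)
  · intro a
    simp only [← hm4 a, dotProduct, sq]

lemma integral_sq_sum_smul_dotProduct_sum_smul [Fintype ι] (hindep : iIndepFun V μ)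
    (hmeas : ∀ i, Measurable (V i)) (hmean : ∀ i k, ∫ ω, V i ω k ∂μ = 0)
    (hcov : ∀ i k l, ∫ ω, V i ω k * V i ω l ∂μ = S k l)
    (hmom4 : ∀ i, Integrable (fun ω => (∑ k, V i ω k ^ 2) ^ 2) μ)
    (hm4 : ∀ i, ∫ ω, (∑ k, V i ω k ^ 2) ^ 2 ∂μ = m4) (c d : ι → ℝ) :
    ∫ ω, ((∑ a, c a • V a ω) ⬝ᵥ (∑ b, d b • V b ω)) ^ 2 ∂μ
      = S.trace ^ 2 * (c ⬝ᵥ d) ^ 2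
        + (∑ k, ∑ l, S k l ^ 2) * ((c ⬝ᵥ c) * (d ⬝ᵥ d) + (c ⬝ᵥ d) ^ 2)
        + (m4 - S.trace ^ 2 - 2 * ∑ k, ∑ l, S k l ^ 2) * ∑ a, (c a * d a) ^ 2 := by
  have hexpand : ∀ ω, (∑ a, c a • V a ω) ⬝ᵥ (∑ b, d b • V b ω)
      = ∑ p : ι × ι, c p.1 * d p.2 * (V p.1 ω ⬝ᵥ V p.2 ω) := fun ω => by
    rw [sum_dotProduct, Fintype.sum_prod_type]
    simp only [dotProduct_sum, smul_dotProduct, dotProduct_smul, smul_eq_mul]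
    exact sum_congr rfl fun _ _ => sum_congr rfl fun _ _ => by ring
  have hterm : ∀ p q : ι × ι,
      ∫ ω, c p.1 * d p.2 * (V p.1 ω ⬝ᵥ V p.2 ω) * (c q.1 * d q.2 * (V q.1 ω ⬝ᵥ V q.2 ω)) ∂μ
        = c p.1 * d p.2 * (c q.1 * d q.2) * gramFourthMoment (S.trace ^ 2)
            (∑ k, ∑ l, S k l ^ 2) (m4 - S.trace ^ 2 - 2 * ∑ k, ∑ l, S k l ^ 2) p.1 p.2 q.1 q.2 := by
    intro p q
    rw [← integral_dotProduct_mul_dotProduct hindep hmeas hmean hcov hmom4 hm4,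
      ← integral_const_mul]
    exact integral_congr_ae (ae_of_all _ fun ω => by ring)
  have hL2 : ∀ p : ι × ι, MemLp (fun ω => c p.1 * d p.2 * (V p.1 ω ⬝ᵥ V p.2 ω)) 2 μ := fun p =>
    (memLp_two_dotProduct (hmeas p.1) (hmeas p.2) (hmom4 p.1) (hmom4 p.2)).const_mul _
  simp_rw [hexpand]
  rw [integral_sum_sq _ fun p _ => hL2 p]
  simp only [hterm, Fintype.sum_prod_type]
  exact sum_mul_gramFourthMoment c d _ _ _

end GramMoments

lemma Matrix.dotProduct_row_row_of_transpose_eq_of_mul_self {n R : Type*} [Fintype n]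
    [CommSemiring R] {B : Matrix n n R} (hsym : Bᵀ = B) (hidem : B * B = B) (i j : n) :
    B i ⬝ᵥ B j = B i j :=
  calc B i ⬝ᵥ B j = (B * Bᵀ) i j := by simp only [mul_apply, transpose_apply, dotProduct]
    _ = B i j := by rw [hsym, hidem]

theorem stmt_19_general {Ω : Type*} [MeasureSpace Ω] [IsProbabilityMeasure (ℙ : Measure Ω)]
    {n d : ℕ} (V : Fin n → Ω → Fin d → ℝ) (S : Matrix (Fin d) (Fin d) ℝ)
    (B : Matrix (Fin n) (Fin n) ℝ) (hBsym : Bᵀ = B) (hBidem : B * B = B)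
    (hmeas : ∀ i, Measurable (V i))
    (hindep : iIndepFun V ℙ)
    (hident : ∀ i j, Measure.map (V i) ℙ = Measure.map (V j) ℙ)
    (hmean : ∀ i k, ∫ ω, V i ω k = 0)
    (hcov : ∀ i k l, ∫ ω, V i ω k * V i ω l = S k l)
    (hmom4 : ∀ i, Integrable (fun ω => (∑ k, (V i ω k) ^ 2) ^ 2) ℙ)
    (Vhat : Fin n → Ω → Fin d → ℝ)
    (hVhat : ∀ i ω k, Vhat i ω k = ∑ j, B i j * V j ω k)
    (i j : Fin n) :
    ∫ ω, (∑ k, Vhat i ω k * Vhat j ω k) ^ 2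
      = (B i i * B j j + (B i j) ^ 2) * (∑ k, ∑ l, (S k l) ^ 2)
        + (B i j) ^ 2 * (∑ k, S k k) ^ 2
        + (∑ k, (B i k * B j k) ^ 2) *
            (variance (fun ω => ∑ k, (V i ω k) ^ 2) ℙ
              - 2 * (∑ k, ∑ l, (S k l) ^ 2)) := by
  have hm4 : ∀ a, ∫ ω, (∑ k, V a ω k ^ 2) ^ 2 = ∫ ω, (∑ k, V i ω k ^ 2) ^ 2 := fun a =>
    (IdentDistrib.comp ⟨(hmeas a).aemeasurable, (hmeas i).aemeasurable, hident a i⟩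
      (u := fun x : Fin d → ℝ => (∑ k, x k ^ 2) ^ 2) (by fun_prop)).integral_eq
  have hrow : ∀ a ω, Vhat a ω = ∑ b, B a b • V b ω := fun a ω => by
    ext k
    simp [hVhat, Finset.sum_apply]
  change ∫ ω, (Vhat i ω ⬝ᵥ Vhat j ω) ^ 2 = _
  simp only [hrow]
  rw [integral_sq_sum_smul_dotProduct_sum_smul hindep hmeas hmean hcov hmom4 hm4,
    variance_sum_sq (hmeas i) (hmom4 i) (hcov i)]
  simp only [dotProduct_row_row_of_transpose_eq_of_mul_self hBsym hBidem, Matrix.trace, Matrix.diag]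
  ring

/-- For i.i.d. mean-zero random vectors `V₁, …, Vₙ` with covariance `S` and finite
fourth moments, an orthogonal projection `B = I - H`, and residuals
`V̂ i = ∑ k, B i k • V k`, for `i ≠ j`:
`E[(V̂ᵢᵀ V̂ⱼ)²] = (B i i * B j j + (B i j)²) ‖S‖_F² + (B i j)² (trace S)²`
`+ ∑ k, (B i k * B j k)² (Var(V₁ᵀV₁) - 2 ‖S‖_F²)`. -/
theorem stmt_19 {Ω : Type*} [MeasureSpace Ω] [IsProbabilityMeasure (ℙ : Measure Ω)]
    {n d : ℕ} (V : Fin n → Ω → Fin d → ℝ) (S : Matrix (Fin d) (Fin d) ℝ)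
    (B : Matrix (Fin n) (Fin n) ℝ) (hBsym : Bᵀ = B) (hBidem : B * B = B)
    (hmeas : ∀ i, Measurable (V i))
    (hindep : iIndepFun V ℙ)
    (hident : ∀ i j, Measure.map (V i) ℙ = Measure.map (V j) ℙ)
    (hmean : ∀ i k, ∫ ω, V i ω k = 0)
    (hcov : ∀ i k l, ∫ ω, V i ω k * V i ω l = S k l)
    (hmom4 : ∀ i, Integrable (fun ω => (∑ k, (V i ω k) ^ 2) ^ 2) ℙ)
    (Vhat : Fin n → Ω → Fin d → ℝ)
    (hVhat : ∀ i ω k, Vhat i ω k = ∑ j, B i j * V j ω k)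
    (i j : Fin n) (hij : i ≠ j) :
    ∫ ω, (∑ k, Vhat i ω k * Vhat j ω k) ^ 2
      = (B i i * B j j + (B i j) ^ 2) * (∑ k, ∑ l, (S k l) ^ 2)
        + (B i j) ^ 2 * (∑ k, S k k) ^ 2
        + (∑ k, (B i k * B j k) ^ 2) *
            (variance (fun ω => ∑ k, (V i ω k) ^ 2) ℙ
              - 2 * (∑ k, ∑ l, (S k l) ^ 2)) :=
  stmt_19_general V S B hBsym hBidem hmeas hindep hident hmean hcov hmom4 Vhat hVhat i j
end
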